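/- Let v be a dense vertex in almost-clique C_j of a decomposition with parameter ε < 1/5, and let R be the number of paths v, x, u of length 2 with u ∈ C_j \ N(v). Then a(v)(1−2ε)Δ ≤ R ≤ εΔ²(2−ε), where a(v) = |C_j \ N(v)|. -/

import Mathlib

open Finset

attribute [local instance] Classical.propDecidable

variable {V : Type*}

/-- `uv` is a friend edge: they are adjacent and share at least `(1-ε)Δ` neighbors. -/
def friendAdj [Fintype V] [DecidableEq V] (G : SimpleGraph V) [DecidableRel G.Adj]
    (Δ : ℕ) (ε : ℝ) (u v : V) : Prop :=
  G.Adj u v ∧ (1 - ε) * (Δ : ℝ) ≤ ((G.neighborFinset u ∩ G.neighborFinset v).card : ℝ)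

/-- The friends of `v`. -/
noncomputable def friends [Fintype V] [DecidableEq V] (G : SimpleGraph V) [DecidableRel G.Adj]
    (Δ : ℕ) (ε : ℝ) (v : V) : Finset V :=
  Finset.univ.filter (fun w => friendAdj G Δ ε v w)

/-- `v` is dense: it has at least `(1-ε)Δ` friends. -/
def isDense [Fintype V] [DecidableEq V] (G : SimpleGraph V) [DecidableRel G.Adj]
    (Δ : ℕ) (ε : ℝ) (v : V) : Prop :=
  (1 - ε) * (Δ : ℝ) ≤ ((friends G Δ ε v).card : ℝ)

/-- The graph on dense vertices whose edges are the friend edges; its connected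
components are the almost-cliques. -/
def friendGraph [Fintype V] [DecidableEq V] (G : SimpleGraph V) [DecidableRel G.Adj]
    (Δ : ℕ) (ε : ℝ) : SimpleGraph V where
  Adj u v := friendAdj G Δ ε u v ∧ isDense G Δ ε u ∧ isDense G Δ ε v
  symm := ⟨by
    rintro u v ⟨⟨hadj, hcard⟩, hu, hv⟩
    exact ⟨⟨hadj.symm, by rwa [Finset.inter_comm]⟩, hv, hu⟩⟩
  loopless := ⟨fun v h => G.loopless.irrefl v h.1.1⟩


/-!
Two vertices of the same almost-clique share at least `(1 - 2ε)Δ` neighbours. Along a friend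
edge `a w` followed by a walk from `w` to `b`, the neighbourhoods of `a` and `b` still share
`(1 - 3ε)Δ` vertices; as `a` and `b` each have `(1 - ε)Δ` friends inside `N(a) ∪ N(b)`, for
`ε < 1/5` they have a common friend `z`, and two friends of `z` share `(1 - 2ε)Δ` neighbours.
Counting the paths `v, x, u` by their endpoint `u` gives the lower bound. Counting them by the
middle vertex `x`: a friend `x` of `v` has at most `εΔ` neighbours outside `N(v)`, any other
neighbour at most `Δ`, and `v` has at least `(1 - ε)Δ` friends, which gives the upper bound.
-/

lemma card_inter_add_card_inter_le {α : Type*} [DecidableEq α] (s t u : Finset α) :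
    #(s ∩ t) + #(t ∩ u) ≤ #t + #(s ∩ u) :=
  calc #(s ∩ t) + #(t ∩ u) = #(s ∩ t ∪ t ∩ u) + #(s ∩ t ∩ (t ∩ u)) :=
        (card_union_add_card_inter _ _).symm
    _ ≤ #t + #(s ∩ u) := add_le_add
      (card_le_card (union_subset inter_subset_right inter_subset_left))
      (card_le_card (inter_subset_inter inter_subset_left inter_subset_right))

noncomputable def twoPathsOutside [Fintype V] [DecidableEq V] (G : SimpleGraph V)
    [DecidableRel G.Adj] (v : V) (C : Finset V) : Finset (V × V) :=
  (univ ×ˢ univ).filter (fun p => G.Adj v p.1 ∧ G.Adj p.1 p.2 ∧ p.2 ∈ C ∧ ¬ G.Adj v p.2)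

section AlmostClique

variable [Fintype V] [DecidableEq V] {G : SimpleGraph V} [DecidableRel G.Adj] {Δ : ℕ} {ε : ℝ}

lemma mem_friends {v w : V} : w ∈ friends G Δ ε v ↔ friendAdj G Δ ε v w := by
  simp [friends]

lemma friends_subset_neighborFinset (v : V) : friends G Δ ε v ⊆ G.neighborFinset v :=
  fun _ hw => (G.mem_neighborFinset _ _).2 (mem_friends.1 hw).1

lemma isDense.le_degree {v : V} (hv : isDense G Δ ε v) : (1 - ε) * Δ ≤ G.degree v := by
  refine hv.trans ?_
  rw [← G.card_neighborFinset_eq_degree]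
  exact_mod_cast card_le_card (friends_subset_neighborFinset v)

lemma add_sub_le_card_inter_neighborFinset (hΔ : ∀ w, G.degree w ≤ Δ) {a b c : V} {s t : ℝ}
    (hab : s ≤ #(G.neighborFinset a ∩ G.neighborFinset b))
    (hbc : t ≤ #(G.neighborFinset b ∩ G.neighborFinset c)) :
    s + t - Δ ≤ #(G.neighborFinset a ∩ G.neighborFinset c) := by
  have key := card_inter_add_card_inter_le
    (G.neighborFinset a) (G.neighborFinset b) (G.neighborFinset c)
  rw [G.card_neighborFinset_eq_degree] at key
  have hb : (G.degree b : ℝ) ≤ Δ := by exact_mod_cast hΔ b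
  have key' : (#(G.neighborFinset a ∩ G.neighborFinset b) : ℝ)
      + #(G.neighborFinset b ∩ G.neighborFinset c)
      ≤ G.degree b + #(G.neighborFinset a ∩ G.neighborFinset c) := by exact_mod_cast key
  linarith

lemma le_card_inter_of_friendAdj_of_friendAdj (hΔ : ∀ w, G.degree w ≤ Δ) {a b z : V}
    (ha : friendAdj G Δ ε a z) (hb : friendAdj G Δ ε b z) :
    (1 - 2 * ε) * Δ ≤ #(G.neighborFinset a ∩ G.neighborFinset b) := by
  have hzb : (1 - ε) * Δ ≤ #(G.neighborFinset z ∩ G.neighborFinset b) := by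
    rw [inter_comm]; exact hb.2
  linarith [add_sub_le_card_inter_neighborFinset hΔ ha.2 hzb]

lemma exists_friendAdj_friendAdj (hΔ : ∀ w, G.degree w ≤ Δ) (hΔpos : 0 < Δ) (hε : ε < 1 / 5)
    {a b : V} (ha : isDense G Δ ε a) (hb : isDense G Δ ε b)
    (hab : (1 - 3 * ε) * Δ ≤ #(G.neighborFinset a ∩ G.neighborFinset b)) :
    ∃ z, friendAdj G Δ ε a z ∧ friendAdj G Δ ε b z := by
  have hunion := card_union_add_card_inter (G.neighborFinset a) (G.neighborFinset b)
  rw [G.card_neighborFinset_eq_degree, G.card_neighborFinset_eq_degree] at hunion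
  have hunion' : (#(G.neighborFinset a ∪ G.neighborFinset b) : ℝ)
      + #(G.neighborFinset a ∩ G.neighborFinset b) = G.degree a + G.degree b := by
    exact_mod_cast hunion
  have hda : (G.degree a : ℝ) ≤ Δ := by exact_mod_cast hΔ a
  have hdb : (G.degree b : ℝ) ≤ Δ := by exact_mod_cast hΔ b
  have hgap : 0 < (1 - 5 * ε) * Δ := mul_pos (by linarith) (by exact_mod_cast hΔpos)
  have hcard : #(G.neighborFinset a ∪ G.neighborFinset b)
      < #(friends G Δ ε a) + #(friends G Δ ε b) := by
    unfold isDense at ha hb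
    exact_mod_cast (by linarith : (#(G.neighborFinset a ∪ G.neighborFinset b) : ℝ)
      < #(friends G Δ ε a) + #(friends G Δ ε b))
  obtain ⟨z, hz⟩ := inter_nonempty_of_card_lt_card_add_card
    ((friends_subset_neighborFinset a).trans subset_union_left)
    ((friends_subset_neighborFinset b).trans subset_union_right) hcard
  rw [mem_inter, mem_friends, mem_friends] at hz
  exact ⟨z, hz⟩

lemma isDense_of_reachable {a b : V} (h : (friendGraph G Δ ε).Reachable a b)
    (ha : isDense G Δ ε a) : isDense G Δ ε b := by
  obtain ⟨p⟩ := h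
  induction p with
  | nil => exact ha
  | cons hadj _ ih => exact ih hadj.2.2

lemma le_card_inter_of_reachable (hΔ : ∀ w, G.degree w ≤ Δ) (hε : ε < 1 / 5) {a b : V}
    (h : (friendGraph G Δ ε).Reachable a b) (ha : isDense G Δ ε a) :
    (1 - 2 * ε) * Δ ≤ #(G.neighborFinset a ∩ G.neighborFinset b) := by
  obtain ⟨p⟩ := h
  induction p with
  | @nil a =>
    rw [inter_self, G.card_neighborFinset_eq_degree]
    have : (G.degree a : ℝ) ≤ Δ := by exact_mod_cast hΔ a
    linarith [ha.le_degree]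
  | cons haw q ih =>
    obtain ⟨⟨hadj, haw⟩, -, hw⟩ := haw
    have hΔpos : 0 < Δ := ((G.degree_pos_iff_exists_adj _).2 ⟨_, hadj⟩).trans_le (hΔ _)
    obtain ⟨z, haz, hbz⟩ := exists_friendAdj_friendAdj hΔ hΔpos hε ha
      (isDense_of_reachable q.reachable hw)
      (by linarith [add_sub_le_card_inter_neighborFinset hΔ haw (ih hw)])
    exact le_card_inter_of_friendAdj_of_friendAdj hΔ haz hbz

lemma mem_twoPathsOutside {v : V} {C : Finset V} {p : V × V} :
    p ∈ twoPathsOutside G v C ↔ G.Adj v p.1 ∧ G.Adj p.1 p.2 ∧ p.2 ∈ C ∧ ¬ G.Adj v p.2 := by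
  simp [twoPathsOutside]

lemma card_twoPathsOutside (v : V) (C : Finset V) :
    #(twoPathsOutside G v C)
      = ∑ u ∈ C \ G.neighborFinset v, #(G.neighborFinset v ∩ G.neighborFinset u) := by
  rw [card_eq_sum_card_fiberwise (f := Prod.snd) (t := C \ G.neighborFinset v)]
  · refine sum_congr rfl fun u hu => ?_
    rw [mem_sdiff, G.mem_neighborFinset] at hu
    refine card_nbij' Prod.fst (fun x => (x, u)) ?_ ?_ ?_ ?_
    · rintro ⟨x, w⟩ h
      obtain ⟨⟨hvx, hxw, -, -⟩, rfl : w = u⟩ := by simpa [mem_twoPathsOutside] using h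
      simpa using ⟨hvx, hxw.symm⟩
    · intro x hx
      obtain ⟨hvx, hux⟩ : G.Adj v x ∧ G.Adj u x := by simpa using hx
      simpa [mem_twoPathsOutside] using ⟨hvx, hux.symm, hu⟩
    · rintro ⟨x, w⟩ h
      obtain ⟨-, rfl : w = u⟩ := by simpa using h
      rfl
    · exact fun _ _ => rfl
  · intro p hp
    simp_all [mem_twoPathsOutside]

lemma card_twoPathsOutside_le (v : V) (C : Finset V) :
    #(twoPathsOutside G v C)
      ≤ ∑ x ∈ G.neighborFinset v, #(G.neighborFinset x \ G.neighborFinset v) := by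
  rw [card_eq_sum_card_fiberwise (f := Prod.fst) (t := G.neighborFinset v)]
  · refine sum_le_sum fun x hx => card_le_card_of_injOn Prod.snd ?_ ?_
    · intro p hp
      obtain ⟨⟨-, hxw, -, hvw⟩, rfl⟩ := by simpa [mem_twoPathsOutside] using hp
      simpa using ⟨hxw, hvw⟩
    · intro p hp q hq h
      simp_all [mem_twoPathsOutside, Prod.ext_iff]
  · intro p hp
    simp_all [mem_twoPathsOutside]

lemma card_neighborFinset_sdiff_le_of_friendAdj (hΔ : ∀ w, G.degree w ≤ Δ) {v x : V}
    (h : friendAdj G Δ ε v x) : (#(G.neighborFinset x \ G.neighborFinset v) : ℝ) ≤ ε * Δ := by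
  have hsplit := card_sdiff_add_card_inter (G.neighborFinset x) (G.neighborFinset v)
  rw [G.card_neighborFinset_eq_degree, inter_comm] at hsplit
  have hsplit' : (#(G.neighborFinset x \ G.neighborFinset v) : ℝ)
      + #(G.neighborFinset v ∩ G.neighborFinset x) = G.degree x := by exact_mod_cast hsplit
  have hx : (G.degree x : ℝ) ≤ Δ := by exact_mod_cast hΔ x
  linarith [h.2]

lemma card_neighborFinset_sdiff_le (hΔ : ∀ w, G.degree w ≤ Δ) (v x : V) :
    (#(G.neighborFinset x \ G.neighborFinset v) : ℝ) ≤ Δ := by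
  have h := (card_le_card (sdiff_subset (s := G.neighborFinset x) (t := G.neighborFinset v))).trans
    ((G.card_neighborFinset_eq_degree x).trans_le (hΔ x))
  exact_mod_cast h

lemma sum_card_neighborFinset_sdiff_le (hΔ : ∀ w, G.degree w ≤ Δ) (hε : ε ≤ 1) {v : V}
    (hv : isDense G Δ ε v) :
    ∑ x ∈ G.neighborFinset v, (#(G.neighborFinset x \ G.neighborFinset v) : ℝ)
      ≤ ε * Δ ^ 2 * (2 - ε) := by
  set F := friends G Δ ε v
  have hF : F ⊆ G.neighborFinset v := friends_subset_neighborFinset v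
  have hfriends : ∑ x ∈ F, (#(G.neighborFinset x \ G.neighborFinset v) : ℝ) ≤ #F * (ε * Δ) := by
    simpa using sum_le_card_nsmul F _ _ fun x hx =>
      card_neighborFinset_sdiff_le_of_friendAdj hΔ (mem_friends.1 hx)
  have hothers : ∑ x ∈ G.neighborFinset v \ F, (#(G.neighborFinset x \ G.neighborFinset v) : ℝ)
      ≤ #(G.neighborFinset v \ F) * Δ := by
    simpa using sum_le_card_nsmul _ _ _ fun x _ => card_neighborFinset_sdiff_le hΔ v x
  have hcard : (#(G.neighborFinset v \ F) : ℝ) = G.degree v - #F := by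
    rw [card_sdiff_of_subset hF, Nat.cast_sub (card_le_card hF), G.card_neighborFinset_eq_degree]
  have hdeg : (G.degree v : ℝ) * Δ ≤ Δ * Δ :=
    mul_le_mul_of_nonneg_right (by exact_mod_cast hΔ v) (Nat.cast_nonneg Δ)
  have hdense : (1 - ε) * Δ * ((1 - ε) * Δ) ≤ #F * ((1 - ε) * Δ) :=
    mul_le_mul_of_nonneg_right hv (mul_nonneg (by linarith) (Nat.cast_nonneg Δ))
  rw [hcard] at hothers
  rw [← sum_sdiff hF]
  linarith

end AlmostClique

theorem stmt_19_general [Fintype V] [DecidableEq V] (G : SimpleGraph V) [DecidableRel G.Adj]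
    (Δ : ℕ) (ε : ℝ) (hΔ : ∀ w, G.degree w ≤ Δ) (hε : ε < 1/5)
    (v : V) (hv : isDense G Δ ε v) :
    let Cv := Finset.univ.filter (fun u => (friendGraph G Δ ε).Reachable v u)
    let R := ((Finset.univ ×ˢ Finset.univ : Finset (V × V)).filter
        (fun p => G.Adj v p.1 ∧ G.Adj p.1 p.2 ∧ p.2 ∈ Cv ∧ ¬ G.Adj v p.2)).card
    ((Cv \ G.neighborFinset v).card : ℝ) * ((1 - 2*ε) * (Δ : ℝ)) ≤ (R : ℝ)
      ∧ (R : ℝ) ≤ ε * (Δ : ℝ)^2 * (2 - ε) := by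
  intro Cv R
  have hR : R = #(twoPathsOutside G v Cv) := rfl
  refine ⟨?_, ?_⟩
  · rw [hR, card_twoPathsOutside, Nat.cast_sum, ← nsmul_eq_mul]
    refine card_nsmul_le_sum _ _ _ fun u hu => le_card_inter_of_reachable hΔ hε ?_ hv
    simpa [Cv] using (mem_sdiff.1 hu).1
  · calc (R : ℝ)
        ≤ ∑ x ∈ G.neighborFinset v, (#(G.neighborFinset x \ G.neighborFinset v) : ℝ) := by
          rw [hR]; exact_mod_cast card_twoPathsOutside_le v Cv
      _ ≤ ε * Δ ^ 2 * (2 - ε) := sum_card_neighborFinset_sdiff_le hΔ (by linarith) hv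

/-- Bounds on `R`, the number of length-2 paths `v, x, u` with `u ∈ C_j \ N(v)`:
`a(v)(1−2ε)Δ ≤ R ≤ εΔ²(2−ε)`. -/
theorem stmt_19 [Fintype V] [DecidableEq V] (G : SimpleGraph V) [DecidableRel G.Adj]
    (Δ : ℕ) (ε : ℝ) (hΔ : ∀ w, G.degree w ≤ Δ) (hε0 : 0 < ε) (hε : ε < 1/5)
    (v : V) (hv : isDense G Δ ε v) :
    let Cv := Finset.univ.filter (fun u => (friendGraph G Δ ε).Reachable v u)
    let R := ((Finset.univ ×ˢ Finset.univ : Finset (V × V)).filter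
        (fun p => G.Adj v p.1 ∧ G.Adj p.1 p.2 ∧ p.2 ∈ Cv ∧ ¬ G.Adj v p.2)).card
    ((Cv \ G.neighborFinset v).card : ℝ) * ((1 - 2*ε) * (Δ : ℝ)) ≤ (R : ℝ)
      ∧ (R : ℝ) ≤ ε * (Δ : ℝ)^2 * (2 - ε) :=
  stmt_19_general G Δ ε hΔ hε v hv
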